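/- arXiv:0911.2966 — 3 statements merged into one kernel-verified Lean document; each statement's English description precedes it below -/
import Mathlib

section
/- Let G be a finite abelian group of rank r with a standard generating set {e_1, ..., e_r} of type (m_1, ..., m_r), and let A_0 = {0, a_1, ..., a_r} where for each i ∈ [1,r] either a_i = e_i or a_i = e_i + a_{σ(i)} with σ(i) ∈ [i+1, r]. Then every g ∈ G can be uniquely written as g = Σ_{i=1}^r λ_i a_i with λ_i ∈ [0, m_i - 1], and the minimal number of elements of A needed to represent g as a sum equals Σ_{i=1}^r λ_i. -/
open Pointwise

variable {G : Type*}

/-- The `n`-fold iterated sumset of a set `A` (with `0` summands giving `{0}`). -/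
def iterSum [AddCommGroup G] (A : Set G) : ℕ → Set G
  | 0 => {0}
  | n + 1 => iterSum A n + A

/-- `A` generates `G` as a group. -/
def Spans [AddCommGroup G] (A : Set G) : Prop := AddSubgroup.closure A = ⊤

/-- The positive diameter of `G` with respect to `A`: the least `n` with
`n·(A ∪ {0}) = G`. -/
noncomputable def diamPlus [AddCommGroup G] (A : Set G) : ℕ :=
  sInf {n : ℕ | iterSum (insert 0 A) n = Set.univ}

/-- The positive length of `g` with respect to `A`. -/
noncomputable def lenPlus [AddCommGroup G] (A : Set G) (g : G) : ℕ :=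
  sInf {n : ℕ | g ∈ iterSum (insert 0 A) n}

/-- The absolute positive diameter of `G`. -/
noncomputable def diamAbs (G : Type*) [AddCommGroup G] : ℕ :=
  sSup {d : ℕ | ∃ A : Set G, Spans A ∧ diamPlus A = d}

/-- `A` is aperiodic: its period (stabilizer) is trivial. -/
def Aperiodic [AddCommGroup G] (A : Set G) : Prop :=
  ∀ g : G, A + {g} = A → g = 0

/-- `A` is `ρ`-maximal: maximal under inclusion subject to `(ρ-1)·(A ∪ {0}) ≠ G`. -/
def RhoMax [AddCommGroup G] (ρ : ℕ) (A : Set G) : Prop :=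
  iterSum (insert 0 A) (ρ - 1) ≠ Set.univ ∧
    ∀ B : Set G, A ⊆ B → iterSum (insert 0 B) (ρ - 1) ≠ Set.univ → B = A

/-- A standard generating set of type `m`. -/
def StandardGen [AddCommGroup G] {r : ℕ} (m : Fin r → ℕ) (e : Fin r → G) : Prop :=
  (∀ i, addOrderOf (e i) = m i) ∧
    ∀ g : G, ∃! lam : Fin r → ℕ, (∀ i, lam i < m i) ∧ g = ∑ i, lam i • e i

noncomputable def tInv (ρ : ℕ) (G : Type*) [AddCommGroup G] : ℕ :=
  sSup {k : ℕ | ∃ A : Set G, Aperiodic A ∧ RhoMax ρ A ∧ Spans A ∧ A.ncard = k}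

noncomputable def sInv (ρ : ℕ) (G : Type*) [AddCommGroup G] : ℕ :=
  sSup {k : ℕ | ∃ A : Set G, Spans A ∧ ρ ≤ diamPlus A ∧ A.ncard = k}

/-!
Write `a i = e i + ∑_{j > i} M i j • e j` with `M` unitriangular. The `e`-coordinate `j` of
`∑ c i • a i` is `c j` plus a combination of the `c i` with `i < j`, and it is determined modulo
`m j`, so a reduced coefficient vector `c` is recovered one coordinate at a time; as there are as
many reduced vectors as elements of `G`, every element has exactly one reduced representation.

For the length, the weight `∑ c i` of the reduced representation vanishes at `0` and grows by at
most one when some `a i` is added: either `c i` just increases, or `c i = m i - 1` and the sum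
carries into `m i • a i`, which is `0` or `m i • a j` with `j > i`, and by downward induction on
`i` adding `m i` copies of `a j` costs at most `m i`. So the weight bounds the length from below,
and the representation itself, a sum of `∑ c i` of the `a i`, bounds it from above.
-/

open Finset Matrix

theorem iterSum_eq_nsmul [AddCommGroup G] (A : Set G) (n : ℕ) : iterSum A n = n • A := by
  induction n with
  | zero => rfl
  | succ n ih => rw [iterSum, ih, succ_nsmul]

theorem sum_nsmul_mem_iterSum [AddCommGroup G] {ι : Type*} [Fintype ι] (a : ι → G) (c : ι → ℕ) :
    ∑ i, c i • a i ∈ iterSum (insert 0 (Set.range a)) (∑ i, c i) := by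
  rw [iterSum_eq_nsmul, ← sum_nsmul_assoc]
  exact Set.finsetSum_mem_finsetSum _ _ _ fun i _ =>
    Set.nsmul_mem_nsmul (Set.mem_insert_of_mem _ (Set.mem_range_self i))

theorem le_of_mem_iterSum [AddCommGroup G] {A : Set G} {F : G → ℕ} (hF0 : F 0 = 0)
    (hF : ∀ g, ∀ x ∈ A, F (g + x) ≤ F g + 1) {n : ℕ} {g : G}
    (hg : g ∈ iterSum (insert 0 A) n) : F g ≤ n := by
  induction n generalizing g with
  | zero => rw [Set.mem_singleton_iff.mp hg, hF0]
  | succ n ih =>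
    obtain ⟨x, hx, y, hy, rfl⟩ := hg
    rcases hy with rfl | hy
    · simpa using (ih hx).trans n.le_succ
    · exact (hF x y hy).trans (by linarith [ih hx])

theorem lenPlus_eq_of_mem_iterSum [AddCommGroup G] {A : Set G} {F : G → ℕ} (hF0 : F 0 = 0)
    (hF : ∀ g, ∀ x ∈ A, F (g + x) ≤ F g + 1) {g : G}
    (hg : g ∈ iterSum (insert 0 A) (F g)) : lenPlus A g = F g :=
  le_antisymm (Nat.sInf_le hg) (le_csInf ⟨_, hg⟩ fun _ hn => le_of_mem_iterSum hF0 hF hn)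

theorem Matrix.IsUpperTriangular.eq_of_vecMul_modEq {ι : Type*} [Fintype ι] [LinearOrder ι]
    {M : Matrix ι ι ℕ} (hM : M.IsUpperTriangular) (hdiag : ∀ i, M i i = 1) {m c d : ι → ℕ}
    (hc : ∀ i, c i < m i) (hd : ∀ i, d i < m i) (h : ∀ j, (c ᵥ* M) j ≡ (d ᵥ* M) j [MOD m j]) :
    c = d := by
  funext j
  induction j using WellFoundedLT.induction with
  | _ j ih =>
  have hsplit : ∀ v : ι → ℕ, (v ᵥ* M) j = v j + ∑ i ∈ univ.erase j, v i * M i j := fun v => by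
    rw [Matrix.vecMul, dotProduct, ← add_sum_erase _ _ (mem_univ j), hdiag, mul_one]
  have hrest : ∑ i ∈ univ.erase j, c i * M i j = ∑ i ∈ univ.erase j, d i * M i j := by
    refine sum_congr rfl fun i hi => ?_
    rcases (ne_of_mem_erase hi).lt_or_gt with hij | hji
    · rw [ih i hij]
    · rw [hM hji, mul_zero, mul_zero]
  have hj := h j
  rw [hsplit, hsplit, hrest] at hj
  exact (Nat.ModEq.add_right_cancel' _ hj).eq_of_lt_of_lt (hc j) (hd j)

theorem sum_nsmul_eq_sum_vecMul_nsmul [AddCommMonoid G] {ι : Type*} [Fintype ι]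
    {a e : ι → G} {M : Matrix ι ι ℕ} (hM : ∀ i, a i = ∑ j, M i j • e j) (c : ι → ℕ) :
    ∑ i, c i • a i = ∑ j, (c ᵥ* M) j • e j := by
  simp_rw [hM, smul_sum, smul_smul, Matrix.vecMul, dotProduct, sum_smul]
  exact sum_comm

theorem exists_upperTriangular_of_chain [AddCommMonoid G] {ι : Type*} [Fintype ι] [LinearOrder ι]
    {e a : ι → G} (ha : ∀ i, a i = e i ∨ ∃ j, i < j ∧ a i = e i + a j) :
    ∃ M : Matrix ι ι ℕ, M.IsUpperTriangular ∧ (∀ i, M i i = 1) ∧ ∀ i, a i = ∑ j, M i j • e j := by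
  suffices h : ∀ i, ∃ v : ι → ℕ, (∀ j < i, v j = 0) ∧ v i = 1 ∧ a i = ∑ j, v j • e j by
    choose M hlow hdiag hM using h
    exact ⟨M, fun i j hji => hlow i j hji, hdiag, hM⟩
  classical
  intro i
  induction i using WellFoundedGT.induction with
  | _ i ih =>
  rcases ha i with hai | ⟨j, hij, hai⟩
  · refine ⟨Pi.single i 1, fun j hji => Pi.single_eq_of_ne hji.ne _, Pi.single_eq_same _ _, ?_⟩
    simp [hai, Pi.single_apply]
  · obtain ⟨v, hlow, hdiag, hv⟩ := ih j hij
    refine ⟨Pi.single i 1 + v, fun k hki => ?_, ?_, ?_⟩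
    · simp [Pi.single_eq_of_ne hki.ne, hlow k (hki.trans hij)]
    · simp [hlow i hij]
    · simp [add_nsmul, sum_add_distrib, Pi.single_apply, hai, hv]

section StandardGen

variable [AddCommGroup G] {r : ℕ} {m : Fin r → ℕ} {e a : Fin r → G}

theorem StandardGen.pos (he : StandardGen m e) (i : Fin r) : 0 < m i := by
  obtain ⟨c, ⟨hc, -⟩, -⟩ := he.2 0
  exact (hc i).pos

theorem StandardGen.nsmul_eq_zero (he : StandardGen m e) (i : Fin r) : m i • e i = 0 := by
  rw [← he.1 i]; exact addOrderOf_nsmul_eq_zero _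

theorem StandardGen.modEq_of_sum_nsmul_eq (he : StandardGen m e) {c d : Fin r → ℕ}
    (h : ∑ j, c j • e j = ∑ j, d j • e j) (j : Fin r) : c j ≡ d j [MOD m j] := by
  have hred : ∀ v : Fin r → ℕ, ∑ j, v j • e j = ∑ j, (v j % m j) • e j := fun v =>
    sum_congr rfl fun j _ => by rw [← he.1 j, mod_addOrderOf_nsmul]
  have hbox : ∀ v : Fin r → ℕ, ∀ j, v j % m j < m j := fun v j => Nat.mod_lt _ (he.pos j)
  exact congrFun ((he.2 _).unique ⟨hbox c, hred c⟩ ⟨hbox d, h ▸ hred d⟩) j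

theorem eq_of_sum_nsmul_eq_of_chain (he : StandardGen m e)
    (ha : ∀ i, a i = e i ∨ ∃ j, i < j ∧ a i = e i + a j) ⦃c d : Fin r → ℕ⦄
    (hc : ∀ i, c i < m i) (hd : ∀ i, d i < m i) (h : ∑ i, c i • a i = ∑ i, d i • a i) :
    c = d := by
  obtain ⟨M, hM, hdiag, haM⟩ := exists_upperTriangular_of_chain ha
  rw [sum_nsmul_eq_sum_vecMul_nsmul haM, sum_nsmul_eq_sum_vecMul_nsmul haM] at h
  exact hM.eq_of_vecMul_modEq hdiag hc hd (he.modEq_of_sum_nsmul_eq h)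

theorem StandardGen.exists_sum_nsmul_eq_of_injective (he : StandardGen m e)
    (hinj : ∀ ⦃c d : Fin r → ℕ⦄, (∀ i, c i < m i) → (∀ i, d i < m i) →
      ∑ i, c i • a i = ∑ i, d i • a i → c = d) (g : G) :
    ∃ c : Fin r → ℕ, (∀ i, c i < m i) ∧ g = ∑ i, c i • a i := by
  let boxSum (v : Fin r → G) (x : ∀ i, Fin (m i)) : G := ∑ i, (x i : ℕ) • v i
  have hbij : Function.Bijective (boxSum e) := by
    refine ⟨fun x y hxy => ?_, fun g => ?_⟩
    · have := (he.2 (boxSum e x)).unique ⟨fun i => (x i).isLt, rfl⟩ ⟨fun i => (y i).isLt, hxy⟩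
      exact funext fun i => Fin.ext (congrFun this i)
    · obtain ⟨c, ⟨hc, rfl⟩, -⟩ := he.2 g
      exact ⟨fun i => ⟨c i, hc i⟩, rfl⟩
  have hinj' : Function.Injective (boxSum a) := fun x y hxy =>
    funext fun i => Fin.ext (congrFun (hinj (fun i => (x i).isLt) (fun i => (y i).isLt) hxy) i)
  obtain ⟨x, rfl⟩ := (Finite.injective_iff_surjective_of_equiv (Equiv.ofBijective _ hbij)).mp
    hinj' g
  exact ⟨fun i => x i, fun i => (x i).isLt, rfl⟩

end StandardGen

theorem weight_add_le_add_one [AddCommGroup G] {ι : Type*} [Fintype ι] [LinearOrder ι] {m : ι → ℕ}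
    {a : ι → G} {F : G → ℕ}
    (hbox : ∀ g, ∃ c : ι → ℕ, (∀ i, c i < m i) ∧ g = ∑ i, c i • a i)
    (hF : ∀ c : ι → ℕ, (∀ i, c i < m i) → F (∑ i, c i • a i) = ∑ i, c i)
    (hstep : ∀ i, m i • a i = 0 ∨ ∃ j, i < j ∧ m i • a i = m i • a j) (i : ι) (g : G) :
    F (g + a i) ≤ F g + 1 := by
  classical
  induction i using WellFoundedGT.induction generalizing g with
  | _ i ih =>
  have hiter : ∀ j, i < j → ∀ (n : ℕ) g, F (g + n • a j) ≤ F g + n := by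
    intro j hij n
    induction n with
    | zero => simp
    | succ n ihn => intro g; grw [succ_nsmul, ← add_assoc, ih j hij, ihn, add_assoc]
  obtain ⟨c, hc, rfl⟩ := hbox g
  set c₀ := Function.update c i 0
  have hc₀ : ∀ n < m i, F (∑ k, c₀ k • a k + n • a i) = ∑ k, c₀ k + n := by
    intro n hn
    have hbox' : ∀ k, (c₀ + Pi.single i n : ι → ℕ) k < m k := fun k => by
      rcases eq_or_ne k i with rfl | hk <;> simp [c₀, *]
    simpa [add_nsmul, sum_add_distrib, Pi.single_apply, ite_smul] using hF _ hbox'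
  have hsplit : ∑ k, c k • a k = ∑ k, c₀ k • a k + c i • a i := by
    rw [← add_sum_erase _ _ (mem_univ i), ← add_sum_erase _ (fun k => c₀ k • a k) (mem_univ i)]
    simp only [c₀, Function.update_self, zero_smul, zero_add, add_comm]
    exact congrArg _ (sum_congr rfl fun k hk => by rw [Function.update_of_ne (ne_of_mem_erase hk)])
  rw [hsplit, hc₀ _ (hc i), add_assoc, ← succ_nsmul]
  rcases (c i + 1).lt_or_ge (m i) with hlt | hge
  · rw [hc₀ _ hlt, add_assoc]
  · have hci : c i + 1 = m i := le_antisymm (hc i) hge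
    have hF₀ : F (∑ k, c₀ k • a k) = ∑ k, c₀ k := by simpa using hc₀ 0 (hc i).pos
    rw [hci]
    rcases hstep i with h0 | ⟨j, hij, hj⟩
    · rw [h0, add_zero, hF₀]; omega
    · rw [hj]; grw [hiter j hij, hF₀, ← hci, add_assoc]

theorem stmt2_general (G : Type*) [AddCommGroup G] {r : ℕ} (m : Fin r → ℕ)
    (e a : Fin r → G) (he : StandardGen m e)
    (ha : ∀ i, a i = e i ∨ ∃ j, i < j ∧ a i = e i + a j) :
    (∀ g : G, ∃! lam : Fin r → ℕ, (∀ i, lam i < m i) ∧ g = ∑ i, lam i • a i) ∧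
      (∀ g : G, ∀ lam : Fin r → ℕ, (∀ i, lam i < m i) → g = ∑ i, lam i • a i →
        lenPlus (Set.range a) g = ∑ i, lam i) := by
  have huniq := eq_of_sum_nsmul_eq_of_chain he ha
  have hexists := he.exists_sum_nsmul_eq_of_injective huniq
  refine ⟨fun g => (hexists g).elim fun c hc => ⟨c, hc, fun d hd =>
    huniq hd.1 hc.1 (hd.2.symm.trans hc.2)⟩, ?_⟩
  obtain ⟨F, hF⟩ : ∃ F : G → ℕ,
      ∀ c : Fin r → ℕ, (∀ i, c i < m i) → F (∑ i, c i • a i) = ∑ i, c i := by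
    choose coeff hcoeff_lt hcoeff using hexists
    refine ⟨fun g => ∑ i, coeff g i, fun c hc => ?_⟩
    dsimp only
    rw [huniq (hcoeff_lt _) hc (hcoeff _).symm]
  have hstep : ∀ i, m i • a i = 0 ∨ ∃ j, i < j ∧ m i • a i = m i • a j := fun i =>
    (ha i).imp (fun h => by rw [h, he.nsmul_eq_zero]) fun ⟨j, hij, h⟩ =>
      ⟨j, hij, by rw [h, nsmul_add, he.nsmul_eq_zero, zero_add]⟩
  rintro g c hc rfl
  rw [← hF c hc]
  refine lenPlus_eq_of_mem_iterSum (F := F) ?_ ?_ ?_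
  · simpa using hF 0 he.pos
  · rintro g _ ⟨i, rfl⟩
    exact weight_add_le_add_one hexists hF hstep i g
  · rw [hF c hc]; exact sum_nsmul_mem_iterSum a c

theorem stmt2 (G : Type*) [AddCommGroup G] [Finite G] {r : ℕ} (m : Fin r → ℕ)
    (hm1 : ∀ i, 1 < m i) (hm : ∀ i j : Fin r, i ≤ j → m i ∣ m j)
    (e a : Fin r → G) (he : StandardGen m e)
    (ha : ∀ i, a i = e i ∨ ∃ j, i < j ∧ a i = e i + a j) :
    (∀ g : G, ∃! lam : Fin r → ℕ, (∀ i, lam i < m i) ∧ g = ∑ i, lam i • a i) ∧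
      (∀ g : G, ∀ lam : Fin r → ℕ, (∀ i, lam i < m i) → g = ∑ i, lam i • a i →
        lenPlus (Set.range a) g = ∑ i, lam i) :=
  stmt2_general G m e a he ha
end

section
/- Let G be a finite abelian group, ρ ∈ [2, diam^+(G)], and let A be a ρ-maximal subset of G. Then for every τ ∈ [1, ρ-1], the period of the τ-fold sumset of A ∪ {0} equals the period of A, i.e. π(A) = π(τ·A_0). -/
open Pointwise

variable {G : Type*}

/-! If `g` is a period of `τ·A` with `τ ≤ ρ - 1`, it is also a period of `(ρ-1)·A`, so adjoining the
translate `A + g` to `A` does not enlarge `(ρ-1)·A`; maximality then forces `A + g = A`. Conversely a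
period of `A` is a period of every `τ·A` with `τ ≥ 1`. -/

section IterSum

variable [AddCommGroup G]

theorem iterSum_one (A : Set G) : iterSum A 1 = A := by
  simp [iterSum]

theorem iterSum_add_singleton_of_le {A : Set G} {g : G} {τ n : ℕ}
    (h : iterSum A τ + {g} = iterSum A τ) (hn : τ ≤ n) :
    iterSum A n + {g} = iterSum A n := by
  induction n, hn using Nat.le_induction with
  | base => exact h
  | succ n _ ih =>
      change iterSum A n + A + {g} = iterSum A n + A
      rw [add_right_comm, ih]

theorem add_multiples_eq_of_add_singleton_eq {S : Set G} {g : G} (h : S + {g} = S) :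
    S + (AddSubmonoid.multiples g : Set G) = S := by
  have step : ∀ x ∈ S, x + g ∈ S := fun x hx => h ▸ Set.add_mem_add hx rfl
  refine subset_antisymm ?_ fun x hx => ⟨x, hx, 0, (AddSubmonoid.multiples g).zero_mem, add_zero x⟩
  rintro _ ⟨x, hx, _, ⟨k, rfl⟩, rfl⟩
  induction k with
  | zero => simpa using hx
  | succ k ih => simpa [succ_nsmul, ← add_assoc] using step _ ih

theorem iterSum_subset_add_of_subset_add {A B : Set G} {M : AddSubmonoid G}
    (h : B ⊆ A + M) : ∀ n, iterSum B n ⊆ iterSum A n + M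
  | 0 => fun x hx => ⟨x, hx, 0, M.zero_mem, add_zero x⟩
  | n + 1 =>
      calc iterSum B n + B ⊆ (iterSum A n + M) + (A + M) :=
            Set.add_subset_add (iterSum_subset_add_of_subset_add h n) h
        _ = iterSum A n + A + M := by rw [add_add_add_comm, M.coe_add_self_eq]

theorem iterSum_union_add_singleton_subset {A : Set G} {g : G} {n : ℕ}
    (h : iterSum A n + {g} = iterSum A n) :
    iterSum (A ∪ (A + {g})) n ⊆ iterSum A n := by
  have hB : A ∪ (A + {g}) ⊆ A + (AddSubmonoid.multiples g : Set G) :=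
    Set.union_subset (fun a ha => ⟨a, ha, 0, (AddSubmonoid.multiples g).zero_mem, add_zero a⟩)
      (Set.add_subset_add_left (Set.singleton_subset_iff.mpr (AddSubmonoid.mem_multiples g)))
  calc iterSum (A ∪ (A + {g})) n ⊆ iterSum A n + (AddSubmonoid.multiples g : Set G) :=
        iterSum_subset_add_of_subset_add hB n
    _ = iterSum A n := add_multiples_eq_of_add_singleton_eq h

end IterSum

namespace RhoMax

variable [AddCommGroup G] {ρ : ℕ} {A : Set G}

theorem eq_of_subset_of_iterSum_subset (hA : RhoMax ρ A) {B : Set G} (hAB : A ⊆ B)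
    (h : iterSum (insert 0 B) (ρ - 1) ⊆ iterSum (insert 0 A) (ρ - 1)) : B = A :=
  hA.2 B hAB fun hu => hA.1 (Set.eq_univ_of_univ_subset (hu ▸ h))

theorem zero_mem (hA : RhoMax ρ A) : (0 : G) ∈ A :=
  hA.eq_of_subset_of_iterSum_subset (Set.subset_insert 0 A) (by rw [Set.insert_idem]) ▸
    Set.mem_insert 0 A

end RhoMax

theorem Set.Finite.add_singleton_eq_of_subset [AddCommGroup G] {A : Set G}
    (hA : A.Finite) {g : G} (h : A + {g} ⊆ A) : A + {g} = A :=
  Set.eq_of_subset_of_ncard_le h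
    (by rw [Set.add_singleton, Set.ncard_image_of_injective _ (add_left_injective g)]) hA

theorem stmt13_general (G : Type*) [AddCommGroup G] [Finite G] (ρ : ℕ)
    (A : Set G) (hA : RhoMax ρ A)
    (τ : ℕ) (hτ1 : 1 ≤ τ) (hτ : τ ≤ ρ - 1) :
    {g : G | A + {g} = A} =
      {g : G | iterSum (insert 0 A) τ + {g} = iterSum (insert 0 A) τ} := by
  have h0 := hA.zero_mem
  rw [Set.insert_eq_of_mem h0]
  ext g
  refine ⟨fun hg => iterSum_add_singleton_of_le ((iterSum_one A).symm ▸ hg) hτ1, fun hg => ?_⟩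
  have hper := iterSum_add_singleton_of_le hg hτ
  have hB : A ∪ (A + {g}) = A := by
    refine hA.eq_of_subset_of_iterSum_subset Set.subset_union_left ?_
    rw [Set.insert_eq_of_mem (Set.mem_union_left _ h0), Set.insert_eq_of_mem h0]
    exact iterSum_union_add_singleton_subset hper
  exact (Set.toFinite A).add_singleton_eq_of_subset (Set.subset_union_right.trans hB.subset)

theorem stmt13 (G : Type*) [AddCommGroup G] [Finite G] (ρ : ℕ) (hρ2 : 2 ≤ ρ)
    (hρd : ρ ≤ diamAbs G) (A : Set G) (hA : RhoMax ρ A)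
    (τ : ℕ) (hτ1 : 1 ≤ τ) (hτ : τ ≤ ρ - 1) :
    {g : G | A + {g} = A} =
      {g : G | iterSum (insert 0 A) τ + {g} = iterSum (insert 0 A) τ} :=
  stmt13_general G ρ A hA τ hτ1 hτ
end

section
/- Let G be a finite abelian group with diam^+(G) ≥ 4 such that every divisor of |G| is congruent to 1 modulo 3. Then the maximum cardinality of an aperiodic 4-maximal generating set for G equals (|G| - 1)/3. -/
/-!
Upper bound: if `x ∉ S + S + S` then `3 |S| ≤ |G| - 1`, by induction on `|G|`. Dyson
e-transforms turn `(S, S)` into a pair `(U, V)` with `U + V ⊆ S + S`, `|U| + |V| = 2 |S|` and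
`V - V` inside the period `K` of `U`. Since `U` is `K`-periodic and avoids `x - v - S`, we get
`|U| + |S + K| ≤ |G|`; when `|V|` is small this already gives `3 |S| ≤ |G| + 1`, which suffices
because `|G| ≡ 1 mod 3`. Otherwise `S` is so dense in each `K`-coset it meets that its pieces in
two distinct such cosets add up to a full coset, so modulo `K` the point `x` is only represented as `δ + δ + δ`
(`3` is invertible on `G ⧸ K`). The induction hypothesis in `G ⧸ K` for the other cosets and in
`K` for the coset `δ` then gives the bound.

Lower bound: if `ord g = 3k + 1`, the preimage of `T̄ \ {0}` in `G` together with
`{0, g, …, k • g}` lifts a set `T̄ ⊆ G ⧸ ⟨g⟩` in which `0` is only the trivial sum of three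
elements to such a set `T ⊆ G`, with `3 |T| = |G| + 2`. A translate of `T \ {0}` containing `0`
has `(|G| - 1) / 3` elements, misses a point in its threefold sumset, and is maximal by the upper
bound; it is aperiodic and generating because every divisor `d > 1` of `|G|` is at least `4` and
coprime to `|G| - 1`.
-/

open Pointwise

variable {G : Type*}

section Cosets
variable {G : Type*} [AddCommGroup G] {K : AddSubgroup G}

open QuotientAddGroup

lemma ncard_preimage_mk (T : Set (G ⧸ K)) :
    (mk ⁻¹' T : Set G).ncard = T.ncard * Nat.card K := by
  rw [← Nat.card_coe_set_eq, Nat.card_congr (preimageMkEquivAddSubgroupProdSet K T),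
    Nat.card_prod, Nat.card_coe_set_eq, mul_comm]

lemma ncard_add_addSubgroup (S : Set G) :
    (S + (K : Set G)).ncard = (mk '' S : Set (G ⧸ K)).ncard * Nat.card K := by
  rw [← preimage_image_mk_eq_add, ncard_preimage_mk]

lemma card_addSubgroup_dvd_ncard {S : Set G} (h : S + (K : Set G) = S) :
    Nat.card K ∣ S.ncard := by
  rw [← h, ncard_add_addSubgroup]
  exact dvd_mul_left _ _

variable [Finite G]

lemma ncard_le_ncard_inter_preimage_add (S : Set G) (R : Set (G ⧸ K)) :
    S.ncard ≤ (S ∩ mk ⁻¹' R).ncard + (mk '' S \ R : Set (G ⧸ K)).ncard * Nat.card K := by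
  rw [← ncard_preimage_mk]
  refine (Set.ncard_le_ncard fun s hs => ?_).trans (Set.ncard_union_le _ _)
  by_cases hsR : (s : G ⧸ K) ∈ R
  · exact Or.inl ⟨hs, hsR⟩
  · exact Or.inr ⟨Set.mem_image_of_mem _ hs, hsR⟩

lemma preimage_singleton_add_subset {α β : G ⧸ K} {X Y : Set G}
    (hX : X ⊆ mk ⁻¹' {α}) (hY : Y ⊆ mk ⁻¹' {β}) (hXY : Nat.card K < X.ncard + Y.ncard) :
    mk ⁻¹' {α + β} ⊆ X + Y := by
  intro c hc
  -- `X` and `c - Y` both lie in the coset `α`, which has only `|K|` elements.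
  have hcY : (c - ·) '' Y ⊆ mk ⁻¹' {α} := by
    rintro _ ⟨y, hy, rfl⟩
    have := hY hy
    simp_all
  obtain ⟨_, hxX, y, hy, rfl⟩ : (X ∩ (c - ·) '' Y).Nonempty := by
    by_contra hdisj
    rw [Set.not_nonempty_iff_eq_empty, ← Set.disjoint_iff_inter_eq_empty] at hdisj
    have := Set.ncard_le_ncard (Set.union_subset hX hcY)
    rw [Set.ncard_union_eq hdisj, Set.ncard_image_of_injective _ sub_right_injective,
      ncard_preimage_mk, Set.ncard_singleton, one_mul] at this
    omega
  exact ⟨c - y, hxX, y, hy, sub_add_cancel c y⟩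

lemma ncard_le_card_of_sub_mem {V : Set G} {v : G} (hV : ∀ w ∈ V, w - v ∈ K) :
    V.ncard ≤ Nat.card K := by
  calc V.ncard ≤ ((v + ·) '' (K : Set G)).ncard :=
        Set.ncard_le_ncard fun w hw => ⟨w - v, hV w hw, add_sub_cancel v w⟩
    _ = Nat.card K := by
        rw [Set.ncard_image_of_injective _ (add_right_injective v)]
        exact (Nat.card_coe_set_eq _).symm

lemma ncard_add_ncard_add_addSubgroup_le {U B : Set G} (hU : U + (K : Set G) = U) {x : G}
    (hx : x ∉ U + B) : U.ncard + (B + (K : Set G)).ncard ≤ Nat.card G := by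
  have hdisj : Disjoint U ((x - ·) '' (B + K)) := by
    refine Set.disjoint_left.2 ?_
    rintro _ hu ⟨_, ⟨b, hb, k, hk, rfl⟩, rfl⟩
    exact hx ⟨x - (b + k) + k, hU ▸ Set.add_mem_add hu hk, b, hb, show _ + b = x by abel⟩
  have hinj : Function.Injective (x - ·) := sub_right_injective
  rw [← Set.ncard_image_of_injective (B + (K : Set G)) hinj, ← Set.ncard_union_eq hdisj]
  exact Set.ncard_le_card _

end Cosets

section Dyson
variable {G : Type*} [AddCommGroup G]

lemma union_vadd_add_inter_vadd_subset (e : G) (U V : Set G) :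
    (U ∪ (e +ᵥ V)) + (V ∩ (-e +ᵥ U)) ⊆ U + V := by
  refine Set.union_add_inter_subset_union.trans (Set.union_subset subset_rfl ?_)
  rintro _ ⟨_, ⟨v, hv, rfl⟩, _, ⟨u, hu, rfl⟩, rfl⟩
  exact ⟨u, hu, v, hv, show u + v = e + v + (-e + u) by abel⟩

lemma ncard_union_vadd_add_ncard_inter_vadd [Finite G] (e : G) (U V : Set G) :
    (U ∪ (e +ᵥ V)).ncard + (V ∩ (-e +ᵥ U)).ncard = U.ncard + V.ncard := by
  have : (V ∩ (-e +ᵥ U)).ncard = (U ∩ (e +ᵥ V)).ncard := by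
    rw [← Set.ncard_vadd_set e, Set.vadd_set_inter, vadd_neg_vadd, Set.inter_comm]
  rw [this, Set.ncard_union_add_ncard_inter, Set.ncard_vadd_set]

/-- Iterating Dyson e-transforms on `(U₀, V₀)` until no transform shrinks the second set. -/
lemma exists_sub_mem_stabilizer [Finite G] (U₀ V₀ : Set G) (hV₀ : V₀.Nonempty) :
    ∃ U V : Set G, U₀ ⊆ U ∧ V.Nonempty ∧ U + V ⊆ U₀ + V₀ ∧
      U.ncard + V.ncard = U₀.ncard + V₀.ncard ∧
      ∀ v ∈ V, ∀ v' ∈ V, v' - v ∈ AddAction.stabilizer G U := by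
  induction hn : V₀.ncard using Nat.strong_induction_on generalizing U₀ V₀ with
  | _ n ih =>
  by_cases hstab : ∀ v ∈ V₀, ∀ v' ∈ V₀, v' - v ∈ AddAction.stabilizer G U₀
  · exact ⟨U₀, V₀, subset_rfl, hV₀, subset_rfl, by rw [hn], hstab⟩
  push Not at hstab
  obtain ⟨v, hv, v', hv', hvv'⟩ := hstab
  rw [AddAction.mem_stabilizer_set' U₀.toFinite] at hvv'
  push Not at hvv'
  obtain ⟨a, ha, hva⟩ := hvv'
  set e := a - v
  have hv₁ : v ∈ V₀ ∩ (-e +ᵥ U₀) := ⟨hv, Set.mem_neg_vadd_set_iff.2 (by simpa [e] using ha)⟩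
  have hv'₁ : v' ∉ V₀ ∩ (-e +ᵥ U₀) := fun h => hva <| by
    have := Set.mem_neg_vadd_set_iff.1 h.2
    simpa [e, vadd_eq_add, add_comm, add_left_comm, sub_eq_add_neg] using this
  have hlt : (V₀ ∩ (-e +ᵥ U₀)).ncard < n :=
    hn ▸ Set.ncard_lt_ncard ⟨Set.inter_subset_left, fun h => hv'₁ (h hv')⟩
  obtain ⟨U, V, hU, hV, hUV, hcard, hst⟩ := ih _ hlt _ _ ⟨v, hv₁⟩ rfl
  exact ⟨U, V, Set.subset_union_left.trans hU, hV,
    hUV.trans (union_vadd_add_inter_vadd_subset e U₀ V₀),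
    by rw [hcard, ncard_union_vadd_add_ncard_inter_vadd, hn], hst⟩

end Dyson

def TripleSumsetBound (G : Type*) [AddCommGroup G] : Prop :=
  ∀ (S : Set G) (x : G), x ∉ S + S + S → 3 * S.ncard ≤ Nat.card G - 1

section TripleSumset
variable {G : Type*} [AddCommGroup G] {K : AddSubgroup G} {S : Set G} {x : G}

open QuotientAddGroup

def DistinctFiberSumsFull (K : AddSubgroup G) (S : Set G) : Prop :=
  ∀ α ∈ (mk '' S : Set (G ⧸ K)), ∀ β ∈ (mk '' S : Set (G ⧸ K)), α ≠ β →
    mk ⁻¹' {α + β} ⊆ (S ∩ mk ⁻¹' {α}) + (S ∩ mk ⁻¹' {β})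

lemma TripleSumsetBound.three_mul_ncard_le_of_subset_coset (hK : TripleSumsetBound K)
    {δ : G ⧸ K} (hS : S ⊆ mk ⁻¹' {δ}) (hxδ : (x : G ⧸ K) = 3 • δ) (hx : x ∉ S + S + S) :
    3 * S.ncard ≤ Nat.card K - 1 := by
  rcases S.eq_empty_or_nonempty with rfl | ⟨t, ht⟩
  · simp
  have htδ : (t : G ⧸ K) = δ := hS ht
  let X : Set K := {k | t + (k : G) ∈ S}
  have hinj : Function.Injective (fun k : K => t + (k : G)) :=
    fun a b h => Subtype.ext (add_left_cancel h)
  have hXS : (fun k : K => t + (k : G)) '' X = S := by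
    refine Set.Subset.antisymm (Set.image_subset_iff.2 fun k hk => hk) fun s hs => ?_
    have hst : s - t ∈ K := by
      rw [← eq_iff_sub_mem, htδ]
      exact hS hs
    exact ⟨⟨s - t, hst⟩, by simpa [X] using hs, add_sub_cancel t s⟩
  have hξ : x - (t + t + t) ∈ K := by
    rw [← eq_iff_sub_mem, hxδ]
    simp only [mk_add, htδ]
    abel
  have hξX : (⟨_, hξ⟩ : K) ∉ X + X + X := by
    rintro ⟨_, ⟨a, ha, b, hb, rfl⟩, c, hc, habc⟩
    refine hx ⟨_, ⟨_, ha, _, hb, rfl⟩, _, hc, ?_⟩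
    have := congrArg Subtype.val habc
    simp only [AddSubgroup.coe_add] at this
    change t + (a : G) + (t + b) + (t + c) = x
    rw [show t + (a : G) + (t + b) + (t + c) = a + b + c + (t + t + t) by abel, this,
      sub_add_cancel]
  have := hK X _ hξX
  rwa [← hXS, Set.ncard_image_of_injective _ hinj]

lemma DistinctFiberSumsFull.eq_of_add_add_eq (hcover : DistinctFiberSumsFull K S)
    (hx : x ∉ S + S + S) {α β γ : G ⧸ K} (hα : α ∈ mk '' S) (hβ : β ∈ mk '' S)
    (hγ : γ ∈ mk '' S) (h : α + β + γ = x) : α = β := by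
  by_contra hne
  obtain ⟨c, hc, rfl⟩ := hγ
  obtain ⟨a, ⟨ha, -⟩, b, ⟨hb, -⟩, hab⟩ :=
    hcover α hα β hβ hne (show x - c ∈ (mk ⁻¹' {α + β} : Set G) by
      rw [Set.mem_preimage, Set.mem_singleton_iff, mk_sub, ← h, add_sub_cancel_right])
  change a + b = x - c at hab
  exact hx ⟨a + b, ⟨a, ha, b, hb, rfl⟩, c, hc, show a + b + c = x by rw [hab, sub_add_cancel]⟩

lemma coprime_three_card_quotient (hG : ∀ d : ℕ, d ∣ Nat.card G → d % 3 = 1) (K : AddSubgroup G) :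
    (Nat.card (G ⧸ K)).Coprime 3 :=
  ((Nat.Prime.coprime_iff_not_dvd Nat.prime_three).2 fun h3 => by
    have := hG 3 (h3.trans (AddSubgroup.card_quotient_dvd_card K))
    omega).symm

variable [Finite G]

lemma three_mul_ncard_le_of_distinctFiberSumsFull (hK : TripleSumsetBound K)
    (hQ : TripleSumsetBound (G ⧸ K)) (h3 : (Nat.card (G ⧸ K)).Coprime 3)
    (hcover : DistinctFiberSumsFull K S)
    (hx : x ∉ S + S + S) : 3 * S.ncard ≤ Nat.card G - 1 := by
  set δ := (nsmulCoprime h3).symm x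
  have hδ : 3 • δ = (x : G ⧸ K) := (nsmulCoprime h3).apply_symm_apply x
  -- Only `δ + δ + δ` represents `x` in `mk '' S`, so `x ∉ 3 (mk '' S \ {δ})`.
  have hxT : (x : G ⧸ K) ∉ (mk '' S \ {δ}) + (mk '' S \ {δ}) + (mk '' S \ {δ}) := by
    rintro ⟨_, ⟨α, hα, β, hβ, rfl⟩, γ, hγ, h⟩
    change α + β + γ = (x : G ⧸ K) at h
    have hαβ := hcover.eq_of_add_add_eq hx hα.1 hβ.1 hγ.1 h
    have hαγ := hcover.eq_of_add_add_eq hx hα.1 hγ.1 hβ.1 (by rw [← h]; abel)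
    subst hαβ hαγ
    refine hα.2 ((nsmulCoprime h3).injective ?_)
    rw [nsmulCoprime_apply, nsmulCoprime_apply, hδ, ← h]
    abel
  have hquot := hQ _ _ hxT
  have hcoset := hK.three_mul_ncard_le_of_subset_coset Set.inter_subset_right hδ.symm
    fun hmem => hx (Set.add_subset_add (Set.add_subset_add Set.inter_subset_left
      Set.inter_subset_left) Set.inter_subset_left hmem)
  have hsplit := ncard_le_ncard_inter_preimage_add S {δ}
  have hn := AddSubgroup.card_eq_card_quotient_mul_card_addSubgroup K
  have hq : 0 < Nat.card (G ⧸ K) := Nat.card_pos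
  have hk : 0 < Nat.card K := Nat.card_pos
  have : 3 * S.ncard + 1 ≤ Nat.card G := by
    rw [hn]
    have hquot' : 3 * (mk '' S \ {δ} : Set (G ⧸ K)).ncard + 1 ≤ Nat.card (G ⧸ K) := by omega
    have hcoset' : 3 * (S ∩ mk ⁻¹' {δ}).ncard + 1 ≤ Nat.card K := by omega
    nlinarith [Nat.mul_le_mul_right (Nat.card K) hquot']
  omega

lemma distinctFiberSumsFull_of_ncard_lt
    (hS : (S + (K : Set G)).ncard + 1 < S.ncard + Nat.card K) : DistinctFiberSumsFull K S := by
  intro α hα β hβ hne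
  refine preimage_singleton_add_subset Set.inter_subset_right Set.inter_subset_right ?_
  have hsplit := ncard_le_ncard_inter_preimage_add S {α, β}
  have hpair : (S ∩ mk ⁻¹' {α, β}).ncard ≤
      (S ∩ mk ⁻¹' {α}).ncard + (S ∩ mk ⁻¹' {β}).ncard := by
    rw [Set.insert_eq, Set.preimage_union, Set.inter_union_distrib_left]
    exact Set.ncard_union_le _ _
  have hrest : (mk '' S \ {α, β} : Set (G ⧸ K)).ncard + 2 = (mk '' S : Set (G ⧸ K)).ncard := by
    have hsub : ({α, β} : Set (G ⧸ K)) ⊆ mk '' S := Set.insert_subset hα (by simpa using hβ)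
    rw [Set.ncard_sdiff hsub, Set.ncard_pair hne]
    have := Set.ncard_le_ncard hsub
    rw [Set.ncard_pair hne] at this
    omega
  rw [ncard_add_addSubgroup, ← hrest] at hS
  nlinarith

lemma tripleSumsetBound_of_proper
    (hG : ∀ d : ℕ, d ∣ Nat.card G → d % 3 = 1)
    (ih : ∀ K : AddSubgroup G, K ≠ ⊥ → K ≠ ⊤ →
      TripleSumsetBound K ∧ TripleSumsetBound (G ⧸ K)) :
    TripleSumsetBound G := by
  intro S x hx
  have hn : Nat.card G % 3 = 1 := hG _ dvd_rfl
  rcases S.eq_empty_or_nonempty with rfl | ⟨s, hs⟩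
  · simp
  obtain ⟨U, V, hSU, ⟨v, hv⟩, hUV, hcard, hV⟩ := exists_sub_mem_stabilizer S S ⟨s, hs⟩
  set K := AddAction.stabilizer G U
  have hxU : x - v ∉ U + S := by
    rintro ⟨u, hu, t, ht, h⟩
    refine hx ⟨u + v, hUV ⟨u, hu, v, hv, rfl⟩, t, ht, ?_⟩
    change u + t = x - v at h
    change u + v + t = x
    rw [add_right_comm, h, sub_add_cancel]
  have hUS : U.ncard + (S + (K : Set G)).ncard ≤ Nat.card G :=
    ncard_add_ncard_add_addSubgroup_le (AddAction.add_stabilizer_self U) hxU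
  have hVK : V.ncard ≤ Nat.card K := ncard_le_card_of_sub_mem (hV v hv)
  have hSK : S.ncard ≤ (S + (K : Set G)).ncard :=
    Set.ncard_le_ncard (Set.subset_add_left S K.zero_mem)
  by_cases hbig : (S + (K : Set G)).ncard + 1 < S.ncard + Nat.card K
  swap
  · omega
  have hbot : K ≠ ⊥ := fun h => by
    have : Nat.card K = 1 := by rw [h, AddSubgroup.card_bot]
    omega
  have htop : K ≠ ⊤ := fun h => by
    rw [h, AddSubgroup.coe_top, Set.add_univ ⟨s, hs⟩, Set.ncard_univ] at hUS
    have := (Set.ncard_pos (s := U)).2 ⟨s, hSU hs⟩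
    omega
  obtain ⟨hKb, hQb⟩ := ih K hbot htop
  exact three_mul_ncard_le_of_distinctFiberSumsFull hKb hQb (coprime_three_card_quotient hG K)
    (distinctFiberSumsFull_of_ncard_lt hbig) hx

end TripleSumset

theorem tripleSumsetBound {G : Type*} [AddCommGroup G] [Finite G]
    (hG : ∀ d : ℕ, d ∣ Nat.card G → d % 3 = 1) : TripleSumsetBound G := by
  induction hn : Nat.card G using Nat.strong_induction_on generalizing G with
  | _ n ih =>
  subst hn
  refine tripleSumsetBound_of_proper hG fun K hbot htop => ?_
  have hcard := AddSubgroup.card_eq_card_quotient_mul_card_addSubgroup K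
  have hK := (AddSubgroup.one_lt_card_iff_ne_bot K).2 hbot
  have hQ : 1 < Nat.card (G ⧸ K) := by
    by_contra h
    have : Nat.card K = Nat.card G := by
      have := Nat.card_pos (α := G ⧸ K)
      rw [hcard, show Nat.card (G ⧸ K) = 1 by omega, one_mul]
    exact htop ((AddSubgroup.card_eq_iff_eq_top K).1 this)
  refine ⟨ih _ ?_ (fun d hd => hG d (hd.trans K.card_addSubgroup_dvd_card)) rfl,
    ih _ ?_ (fun d hd => hG d (hd.trans K.card_quotient_dvd_card)) rfl⟩
  · rw [hcard]
    exact lt_mul_left (by omega) hQ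
  · rw [hcard]
    exact lt_mul_right (by omega) hK

section Construction
variable {G : Type*} [AddCommGroup G]

open QuotientAddGroup AddSubgroup

def OnlyTrivialZeroTriples (T : Set G) : Prop :=
  ∀ a ∈ T, ∀ b ∈ T, ∀ c ∈ T, a + b + c = 0 → a = 0 ∧ b = 0 ∧ c = 0

variable {g : G} {k : ℕ} {Tb : Set (G ⧸ zmultiples g)}

lemma OnlyTrivialZeroTriples.lift (hTb : OnlyTrivialZeroTriples Tb) (h0 : 0 ∈ Tb)
    (hk : 3 * k < addOrderOf g) :
    OnlyTrivialZeroTriples (mk ⁻¹' (Tb \ {0}) ∪ (· • g) '' Set.Iic k) := by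
  have hmk : ∀ i : ℕ, (↑(i • g) : G ⧸ zmultiples g) = 0 := fun i =>
    (eq_zero_iff _).2 (nsmul_mem (mem_zmultiples g) i)
  have hmem : ∀ y ∈ mk ⁻¹' (Tb \ {0}) ∪ (· • g) '' Set.Iic k, (y : G ⧸ zmultiples g) ∈ Tb := by
    rintro y (hy | ⟨i, -, rfl⟩)
    · exact hy.1
    · rwa [hmk]
  have hzero : ∀ y ∈ mk ⁻¹' (Tb \ {0}) ∪ (· • g) '' Set.Iic k,
      (y : G ⧸ zmultiples g) = 0 → ∃ i ≤ k, i • g = y := by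
    rintro y (hy | ⟨i, hi, rfl⟩) hy0
    · exact (hy.2 hy0).elim
    · exact ⟨i, hi, rfl⟩
  intro a ha b hb c hc habc
  obtain ⟨ha0, hb0, hc0⟩ := hTb _ (hmem a ha) _ (hmem b hb) _ (hmem c hc)
    (by rw [← mk_add, ← mk_add, habc, mk_zero])
  obtain ⟨i, hi, rfl⟩ := hzero a ha ha0
  obtain ⟨j, hj, rfl⟩ := hzero b hb hb0
  obtain ⟨l, hl, rfl⟩ := hzero c hc hc0
  have hdvd : addOrderOf g ∣ i + j + l :=
    addOrderOf_dvd_of_nsmul_eq_zero (by rwa [add_nsmul, add_nsmul])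
  obtain ⟨rfl, rfl, rfl⟩ : i = 0 ∧ j = 0 ∧ l = 0 := by
    have := Nat.eq_zero_of_dvd_of_lt hdvd (by omega)
    omega
  simp

lemma ncard_preimage_diff_union_nsmul [Finite G] (h0 : 0 ∈ Tb) (hk : k < addOrderOf g) :
    (mk ⁻¹' (Tb \ {0}) ∪ (· • g) '' Set.Iic k).ncard =
      (Tb.ncard - 1) * addOrderOf g + (k + 1) := by
  have hdisj : Disjoint (mk ⁻¹' (Tb \ {0})) ((· • g) '' Set.Iic k) := by
    refine Set.disjoint_right.2 ?_
    rintro _ ⟨i, -, rfl⟩ hi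
    exact hi.2 ((eq_zero_iff _).2 (nsmul_mem (mem_zmultiples g) i))
  have hinj : Set.InjOn (· • g) (Set.Iic k) :=
    nsmul_injOn_Iio_addOrderOf.mono fun i hi => lt_of_le_of_lt hi hk
  rw [Set.ncard_union_eq hdisj, ncard_preimage_mk, Set.ncard_sdiff_singleton_of_mem h0,
    Nat.card_zmultiples, hinj.ncard_image]
  simp

end Construction

theorem exists_onlyTrivialZeroTriples {G : Type*} [AddCommGroup G] [Finite G]
    (hG : ∀ d : ℕ, d ∣ Nat.card G → d % 3 = 1) :
    ∃ T : Set G, 0 ∈ T ∧ OnlyTrivialZeroTriples T ∧ 3 * T.ncard = Nat.card G + 2 := by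
  induction hn : Nat.card G using Nat.strong_induction_on generalizing G with
  | _ n ih =>
  subst hn
  rcases subsingleton_or_nontrivial G with hG1 | hG1
  · refine ⟨{0}, rfl, fun a _ b _ c _ _ => ⟨Subsingleton.elim _ _, Subsingleton.elim _ _,
      Subsingleton.elim _ _⟩, ?_⟩
    rw [Set.ncard_singleton, Nat.card_of_subsingleton (0 : G)]
  obtain ⟨g, hg⟩ := exists_ne (0 : G)
  have hm : addOrderOf g % 3 = 1 := hG _ (addOrderOf_dvd_natCard g)
  have hm1 : addOrderOf g ≠ 1 := by rwa [Ne, AddMonoid.addOrderOf_eq_one_iff]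
  have hcard := AddSubgroup.card_eq_card_quotient_mul_card_addSubgroup (AddSubgroup.zmultiples g)
  rw [Nat.card_zmultiples] at hcard
  have hq := Nat.card_pos (α := G ⧸ AddSubgroup.zmultiples g)
  obtain ⟨Tb, h0, hTb, hTbcard⟩ := ih _ (by rw [hcard]; exact lt_mul_right hq (by omega))
    (fun d hd => hG d (hd.trans (AddSubgroup.card_quotient_dvd_card _))) rfl
  refine ⟨_, Or.inr ⟨0, Set.mem_Iic.2 (Nat.zero_le _), zero_nsmul g⟩,
    hTb.lift h0 (k := addOrderOf g / 3) (by omega), ?_⟩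
  rw [ncard_preimage_diff_union_nsmul h0 (by omega), hcard]
  obtain ⟨t, ht⟩ : ∃ t, Tb.ncard = t + 1 := ⟨Tb.ncard - 1, by omega⟩
  obtain ⟨k, hk⟩ : ∃ k, addOrderOf g = 3 * k + 1 := ⟨addOrderOf g / 3, by omega⟩
  have hq' : Nat.card (G ⧸ AddSubgroup.zmultiples g) = 3 * t + 1 := by omega
  rw [ht, hk, hq', Nat.add_sub_cancel, show (3 * k + 1) / 3 = k by omega]
  ring

lemma iterSum_three {G : Type*} [AddCommGroup G] (X : Set G) : iterSum X 3 = X + X + X := by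
  show ({0} : Set G) + X + X + X = X + X + X
  rw [Set.singleton_zero, zero_add]

section Extremal
variable {G : Type*} [AddCommGroup G]

lemma aperiodic_of_three_mul_ncard_add_one {A : Set G} (hA : 3 * A.ncard + 1 = Nat.card G) :
    Aperiodic A := by
  intro g hg
  have hgA : g ∈ AddAction.stabilizer G A := by
    rw [AddAction.mem_stabilizer_iff, ← Set.image_vadd]
    simp only [vadd_eq_add]
    rw [← Set.singleton_add, add_comm, hg]
  have hA' : Nat.card (AddAction.stabilizer G A) ∣ A.ncard :=
    card_addSubgroup_dvd_ncard (AddAction.add_stabilizer_self A)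
  have hG' := (AddAction.stabilizer G A).card_addSubgroup_dvd_card
  have h1 : Nat.card (AddAction.stabilizer G A) = 1 := by
    have := Nat.dvd_sub hG' (hA'.mul_left 3)
    rwa [← hA, Nat.add_sub_cancel_left, Nat.dvd_one] at this
  rwa [AddSubgroup.eq_bot_of_card_eq _ h1, AddSubgroup.mem_bot] at hgA

variable [Finite G]

lemma exists_zero_mem_three_mul_ncard_add_one
    (hG : ∀ d : ℕ, d ∣ Nat.card G → d % 3 = 1) (h1 : Nat.card G ≠ 1) :
    ∃ A : Set G, 0 ∈ A ∧ 3 * A.ncard + 1 = Nat.card G ∧ A + A + A ≠ Set.univ := by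
  obtain ⟨T, h0, hT, hcard⟩ := exists_onlyTrivialZeroTriples hG
  obtain ⟨t, htT, ht0⟩ : ∃ t ∈ T, t ≠ 0 := by
    by_contra! h
    have := Set.ncard_le_ncard (show T ⊆ {0} from h)
    rw [Set.ncard_singleton] at this
    have := Nat.card_pos (α := G)
    omega
  -- Translating `T \ {0}` by `-t` puts `0` in the set and `-3t` outside its threefold sumset.
  refine ⟨-t +ᵥ (T \ {0}), ⟨t, ⟨htT, ht0⟩, neg_add_cancel t⟩, ?_, fun huniv => ?_⟩
  · rw [Set.ncard_vadd_set, Set.ncard_sdiff_singleton_of_mem h0]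
    have : 0 < T.ncard := (Set.ncard_pos (s := T)).2 ⟨0, h0⟩
    omega
  obtain ⟨_, ⟨_, ⟨a, ha, rfl⟩, _, ⟨b, hb, rfl⟩, rfl⟩, _, ⟨c, hc, rfl⟩, habc⟩ :=
    huniv ▸ Set.mem_univ (-(t + t + t))
  change -t + a + (-t + b) + (-t + c) = -(t + t + t) at habc
  refine ha.2 (hT a ha.1 b hb.1 c hc.1 ?_).1
  rw [show a + b + c = -t + a + (-t + b) + (-t + c) + (t + t + t) by abel, habc, neg_add_cancel]

lemma spans_of_three_mul_ncard_add_one (hG : ∀ d : ℕ, d ∣ Nat.card G → d % 3 = 1) {A : Set G}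
    (hA : 3 * A.ncard + 1 = Nat.card G) : Spans A := by
  by_contra hne
  set H := AddSubgroup.closure A
  have hi1 : H.index ≠ 1 := fun h => hne (AddSubgroup.index_eq_one.1 h)
  have hi : H.index % 3 = 1 := hG _ H.index_dvd_card
  have hAH : A.ncard ≤ Nat.card H :=
    (Set.ncard_le_ncard AddSubgroup.subset_closure).trans_eq (Nat.card_coe_set_eq _).symm
  have h4 : Nat.card H * 4 ≤ Nat.card G :=
    H.card_mul_index ▸ Nat.mul_le_mul_left _ (by omega)
  -- So `|A| ≤ 1`, forcing `|G| = 1` (excluded by `H ≠ ⊤`) or `|G| = 4` (excluded by `2 ∣ 4`).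
  rcases (by omega : Nat.card G = 1 ∨ Nat.card G = 4) with h | h
  · exact hi1 (Nat.dvd_one.1 (h ▸ H.index_dvd_card))
  · have := hG 2 (by rw [h]; norm_num)
    omega

lemma ncard_le_of_iterSum_three_ne_univ (hG : ∀ d : ℕ, d ∣ Nat.card G → d % 3 = 1) {A : Set G}
    (hA : iterSum (insert 0 A) 3 ≠ Set.univ) : A.ncard ≤ (Nat.card G - 1) / 3 := by
  obtain ⟨x, hx⟩ := (Set.ne_univ_iff_exists_notMem _).1 hA
  rw [iterSum_three] at hx
  have := tripleSumsetBound hG _ x hx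
  have := Set.ncard_le_ncard (Set.subset_insert 0 A)
  omega

end Extremal

theorem stmt16_general (G : Type*) [AddCommGroup G] [Finite G]
    (h3 : ∀ d : ℕ, d ∣ Nat.card G → d % 3 = 1) :
    sSup {k : ℕ | ∃ A : Set G, Aperiodic A ∧ RhoMax 4 A ∧ Spans A ∧ A.ncard = k}
      = (Nat.card G - 1) / 3 := by
  have hub : (Nat.card G - 1) / 3 ∈
      upperBounds {k : ℕ | ∃ A : Set G, Aperiodic A ∧ RhoMax 4 A ∧ Spans A ∧ A.ncard = k} := by
    rintro _ ⟨A, -, hA, -, rfl⟩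
    exact ncard_le_of_iterSum_three_ne_univ h3 hA.1
  refine le_antisymm (csSup_le' hub) ?_
  rcases eq_or_ne (Nat.card G) 1 with h1 | h1
  · simp [h1]
  obtain ⟨A, h0, hcard, hA⟩ := exists_zero_mem_three_mul_ncard_add_one h3 h1
  refine le_csSup ⟨_, hub⟩ ⟨A, aperiodic_of_three_mul_ncard_add_one hcard, ⟨?_, fun B hAB hB => ?_⟩,
    spans_of_three_mul_ncard_add_one h3 hcard, by omega⟩
  · rwa [show 4 - 1 = 3 from rfl, Set.insert_eq_of_mem h0, iterSum_three]
  · have := ncard_le_of_iterSum_three_ne_univ h3 hB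
    exact (Set.eq_of_subset_of_ncard_le hAB (by omega)).symm

theorem stmt16 (G : Type*) [AddCommGroup G] [Finite G] (h : 4 ≤ diamAbs G)
    (h3 : ∀ d : ℕ, d ∣ Nat.card G → d % 3 = 1) :
    sSup {k : ℕ | ∃ A : Set G, Aperiodic A ∧ RhoMax 4 A ∧ Spans A ∧ A.ncard = k}
      = (Nat.card G - 1) / 3 :=
  stmt16_general G h3
end
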